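/- Let A be a positive stochastic H×H real matrix and let ε > 0 be the minimum of the entries of A. Then for every x ≥ 0 and every pair of indices i, j, the (i,j) entry of exp(xA) satisfies (exp(xA))ᵢⱼ ≥ ε·(eˣ − 1). In particular, every entry of exp(xA) tends to +∞ as x → +∞. -/

import Mathlib

/-!
Every power `Aⁿ` with `n ≥ 1` of a row-stochastic matrix whose entries are at least `ε` again has
all entries at least `ε`, since each entry of `Aⁿ⁺¹ = Aⁿ A` is a convex combination of entries of
a column of `A`. Comparing the exponential series `∑ xⁿ/n! (Aⁿ)ᵢⱼ` termwise with
`ε ∑_{n ≥ 1} xⁿ/n! = ε (eˣ - 1)` gives the bound, and the divergence follows.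
-/

open Matrix Filter

open scoped Nat

namespace Matrix

variable {R m : Type*} [Fintype m] [DecidableEq m]

section Stochastic

variable [Semiring R] [PartialOrder R] [IsOrderedRing R]

theorem le_mul_apply_of_mem_rowStochastic {P M : Matrix m m R} (hP : P ∈ rowStochastic R m)
    {ε : R} {i j : m} (hM : ∀ k, ε ≤ M k j) : ε ≤ (P * M) i j :=
  calc ε = ∑ k, P i k * ε := by rw [← Finset.sum_mul, sum_row_of_mem_rowStochastic hP, one_mul]
    _ ≤ ∑ k, P i k * M k j :=
      Finset.sum_le_sum fun k _ => mul_le_mul_of_nonneg_left (hM k) (nonneg_of_mem_rowStochastic hP)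

theorem le_pow_apply_of_mem_rowStochastic {M : Matrix m m R} (hM : M ∈ rowStochastic R m)
    {ε : R} (hε : ∀ i j, ε ≤ M i j) {n : ℕ} (hn : n ≠ 0) (i j : m) : ε ≤ (M ^ n) i j := by
  obtain ⟨n, rfl⟩ := Nat.exists_eq_succ_of_ne_zero hn
  rw [pow_succ]
  exact le_mul_apply_of_mem_rowStochastic (pow_mem hM n) (hε · j)

end Stochastic

theorem hasSum_exp_smul_apply (M : Matrix m m ℝ) (x : ℝ) (i j : m) :
    HasSum (fun n => x ^ n / n ! * (M ^ n) i j) (NormedSpace.exp (x • M) i j) := by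
  -- the operator norm makes `Matrix m m ℝ` a Banach algebra without changing its entrywise topology
  have h := open scoped Norms.Operator in NormedSpace.exp_series_hasSum_exp' (𝕂 := ℝ) (x • M)
  convert Pi.hasSum.mp (Pi.hasSum.mp h i) j using 1
  · ext n
    simp only [div_eq_inv_mul, smul_pow, smul_apply, smul_eq_mul]
    ring
  · rfl

theorem mul_exp_sub_one_le_exp_smul_apply {M : Matrix m m ℝ} (hM : M ∈ rowStochastic ℝ m)
    {ε : ℝ} (hε : ∀ i j, ε ≤ M i j) {x : ℝ} (hx : 0 ≤ x) (i j : m) :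
    ε * (Real.exp x - 1) ≤ NormedSpace.exp (x • M) i j := by
  have hexp : HasSum (fun n => ε * (x ^ (n + 1) / (n + 1)!)) (ε * (Real.exp x - 1)) := by
    have := (NormedSpace.expSeries_div_hasSum_exp x).mul_left ε
    rw [← hasSum_nat_add_iff' 1] at this
    simpa [Real.exp_eq_exp_ℝ, mul_sub] using this
  have hM' := hasSum_exp_smul_apply M x i j
  rw [← hasSum_nat_add_iff' 1] at hM'
  have hterm : ∀ n : ℕ, ε * (x ^ (n + 1) / (n + 1)!) ≤ x ^ (n + 1) / (n + 1)! * (M ^ (n + 1)) i j :=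
    fun n => by
      rw [mul_comm ε]
      exact mul_le_mul_of_nonneg_left (le_pow_apply_of_mem_rowStochastic hM hε n.succ_ne_zero i j)
        (by positivity)
  have h0 : 0 ≤ (M ^ 0 : Matrix m m ℝ) i j := nonneg_of_mem_rowStochastic (pow_mem hM 0)
  have htail := hasSum_le hterm hexp hM'
  simp only [Finset.range_one, Finset.sum_singleton, pow_zero, Nat.factorial_zero] at htail h0
  linarith

end Matrix

theorem stmt7_general (H : ℕ) (A : Matrix (Fin H) (Fin H) ℝ)
    (hrow : ∀ i, ∑ j, A i j = 1)
    (ε : ℝ) (hε : 0 < ε)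
    (hmin : IsLeast (Set.range fun p : Fin H × Fin H => A p.1 p.2) ε) :
    (∀ x : ℝ, 0 ≤ x → ∀ i j, ε * (Real.exp x - 1) ≤ (NormedSpace.exp (x • A)) i j) ∧
    (∀ i j, Tendsto (fun x : ℝ => (NormedSpace.exp (x • A)) i j) atTop atTop) := by
  have hA : ∀ i j, ε ≤ A i j := fun i j => hmin.2 ⟨(i, j), rfl⟩
  have hstoch : A ∈ rowStochastic ℝ (Fin H) :=
    mem_rowStochastic_iff_sum.2 ⟨fun i j => hε.le.trans (hA i j), hrow⟩
  have hbound := fun x (hx : 0 ≤ x) => mul_exp_sub_one_le_exp_smul_apply hstoch hA hx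
  have hlow : Tendsto (fun x => ε * (Real.exp x - 1)) atTop atTop :=
    (Real.tendsto_exp_atTop.atTop_add tendsto_const_nhds).const_mul_atTop hε
  refine ⟨hbound, fun i j => tendsto_atTop_mono' atTop ?_ hlow⟩
  filter_upwards [eventually_ge_atTop 0] with x hx using hbound x hx i j

/-- If `ε > 0` is the minimum entry of a positive stochastic matrix `A`, then every entry of
`exp(xA)` is at least `ε·(eˣ − 1)` for `x ≥ 0`; in particular every entry of `exp(xA)` tends
to `+∞` as `x → +∞`. -/
theorem stmt7 (H : ℕ) (hH : 1 ≤ H) (A : Matrix (Fin H) (Fin H) ℝ)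
    (hpos : ∀ i j, 0 < A i j) (hrow : ∀ i, ∑ j, A i j = 1)
    (ε : ℝ) (hε : 0 < ε)
    (hmin : IsLeast (Set.range fun p : Fin H × Fin H => A p.1 p.2) ε) :
    (∀ x : ℝ, 0 ≤ x → ∀ i j, ε * (Real.exp x - 1) ≤ (NormedSpace.exp (x • A)) i j) ∧
    (∀ i j, Tendsto (fun x : ℝ => (NormedSpace.exp (x • A)) i j) atTop atTop) :=
  stmt7_general H A hrow ε hε hmin
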